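/- Let K be a 3DM instance on node sets X={x_1,…,x_q}, Y={y_1,…,y_q}, Z={z_1,…,z_q} with hyperedge set E={h_1,…,h_m}, and let Q(K) be the associated set of integers. For any four numbers n_1, n_2, n_3, n_4 ∈ Q(K), their sum n_1+n_2+n_3+n_4 equals 0 if and only if {n_1,n_2,n_3,n_4} = {x'_i, y'_j, z'_k, h'_ℓ} for some hyperedge h_ℓ = (x_i, y_j, z_k) ∈ E. -/
import Mathlib


/-- `ρ = max {29, 3q}`. -/
def rho (q : ℕ) : ℕ := max 29 (3 * q)

/-- The number `x'_i = iρ + 1` associated to the node `x_i`. -/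
def xnum (q i : ℕ) : ℤ := (i : ℤ) * (rho q : ℤ) + 1

/-- The number `y'_j = jρ² + 2` associated to the node `y_j`. -/
def ynum (q j : ℕ) : ℤ := (j : ℤ) * (rho q : ℤ) ^ 2 + 2

/-- The number `z'_k = kρ³ + 4` associated to the node `z_k`. -/
def znum (q k : ℕ) : ℤ := (k : ℤ) * (rho q : ℤ) ^ 3 + 4

/-- The number `h'_ℓ = -iρ - jρ² - kρ³ - 7` associated to the hyperedge `h_ℓ = (x_i, y_j, z_k)`. -/
def hnum (q : ℕ) (h : ℕ × ℕ × ℕ) : ℤ :=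
  -((h.1 : ℤ) * (rho q : ℤ)) - (h.2.1 : ℤ) * (rho q : ℤ) ^ 2 - (h.2.2 : ℤ) * (rho q : ℤ) ^ 3 - 7

/-- The set `Q(K)` of the `3q + m` integers associated to a 3DM instance `K = (q, E)`. -/
def QK (q : ℕ) (E : Finset (ℕ × ℕ × ℕ)) : Finset ℤ :=
  ((Finset.Icc 1 q).image (xnum q)) ∪ ((Finset.Icc 1 q).image (ynum q)) ∪
    ((Finset.Icc 1 q).image (znum q)) ∪ (E.image (hnum q))

/-- `(q, E)` is a 3DM instance: every hyperedge is a triple of node indices in `{1, …, q}`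
(`X`, `Y` and `Z` are identified with `{1, …, q}`). -/
def ValidE (q : ℕ) (E : Finset (ℕ × ℕ × ℕ)) : Prop :=
  ∀ h ∈ E, h.1 ∈ Finset.Icc 1 q ∧ h.2.1 ∈ Finset.Icc 1 q ∧ h.2.2 ∈ Finset.Icc 1 q

/-- A hypermatching: no two distinct hyperedges share a node. -/
def Matching (M : Finset (ℕ × ℕ × ℕ)) : Prop :=
  ∀ h ∈ M, ∀ h' ∈ M, h ≠ h' → h.1 ≠ h'.1 ∧ h.2.1 ≠ h'.2.1 ∧ h.2.2 ≠ h'.2.2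

lemma keyD (R A B C D : ℤ) (h : A*R + B*R^2 + C*R^3 + D = 0) (h1 : -R < D) (h2 : D < R) :
    D = 0 := by
  have hdvd : R ∣ D := ⟨-(A + B*R + C*R^2), by linear_combination h⟩
  exact Int.eq_zero_of_abs_lt_dvd hdvd (abs_lt.mpr ⟨h1, h2⟩)

lemma keyABC (R A B C : ℤ) (hR : 0 < R) (h : A*R + B*R^2 + C*R^3 = 0)
    (hA1 : -R < A) (hA2 : A < R) (hB1 : -R < B) (hB2 : B < R) :
    A = 0 ∧ B = 0 ∧ C = 0 := by
  have hRne : R ≠ 0 := hR.ne'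
  have h1 : (A + B*R + C*R^2) * R = 0 := by linear_combination h
  have h1' : A + B*R + C*R^2 = 0 := by
    rcases mul_eq_zero.mp h1 with h' | h'
    · exact h'
    · exact absurd h' hRne
  have hA : A = 0 := keyD R B C 0 A (by linear_combination h1') hA1 hA2
  have h2 : (B + C*R) * R = 0 := by linear_combination h1' - hA
  have h2' : B + C*R = 0 := by
    rcases mul_eq_zero.mp h2 with h' | h'
    · exact h'
    · exact absurd h' hRne
  have hB : B = 0 := keyD R C 0 0 B (by linear_combination h2') hB1 hB2
  have h3 : C * R = 0 := by linear_combination h2' - hB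
  have hC : C = 0 := by
    rcases mul_eq_zero.mp h3 with h' | h'
    · exact h'
    · exact absurd h' hRne
  exact ⟨hA, hB, hC⟩

lemma decomp (q : ℕ) (E : Finset (ℕ × ℕ × ℕ)) (n : ℤ) (h : n ∈ QK q E) :
    ∃ a b c d : ℤ,
      n = a * (rho q : ℤ) + b * (rho q : ℤ)^2 + c * (rho q : ℤ)^3 + d ∧
      (d = 1 ∨ d = 2 ∨ d = 4 ∨ d = -7) ∧
      ((∃ i : ℕ, 1 ≤ i ∧ i ≤ q ∧ a = (i:ℤ) ∧ b = 0 ∧ c = 0 ∧ d = 1 ∧ n = xnum q i) ∨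
       (∃ j : ℕ, 1 ≤ j ∧ j ≤ q ∧ a = 0 ∧ b = (j:ℤ) ∧ c = 0 ∧ d = 2 ∧ n = ynum q j) ∨
       (∃ k : ℕ, 1 ≤ k ∧ k ≤ q ∧ a = 0 ∧ b = 0 ∧ c = (k:ℤ) ∧ d = 4 ∧ n = znum q k) ∨
       (∃ e, e ∈ E ∧ a = -(e.1:ℤ) ∧ b = -(e.2.1:ℤ) ∧ c = -(e.2.2:ℤ) ∧ d = -7 ∧ n = hnum q e)) := by
  simp only [QK, Finset.mem_union, Finset.mem_image, Finset.mem_Icc] at h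
  rcases h with ((⟨i, ⟨hi1, hi2⟩, rfl⟩ | ⟨j, ⟨hj1, hj2⟩, rfl⟩) | ⟨k, ⟨hk1, hk2⟩, rfl⟩) | ⟨e, he, rfl⟩
  · exact ⟨(i:ℤ), 0, 0, 1, by rw [xnum]; ring, Or.inl rfl,
      Or.inl ⟨i, hi1, hi2, rfl, rfl, rfl, rfl, rfl⟩⟩
  · exact ⟨0, (j:ℤ), 0, 2, by rw [ynum]; ring, Or.inr (Or.inl rfl),
      Or.inr (Or.inl ⟨j, hj1, hj2, rfl, rfl, rfl, rfl, rfl⟩)⟩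
  · exact ⟨0, 0, (k:ℤ), 4, by rw [znum]; ring, Or.inr (Or.inr (Or.inl rfl)),
      Or.inr (Or.inr (Or.inl ⟨k, hk1, hk2, rfl, rfl, rfl, rfl, rfl⟩))⟩
  · exact ⟨-(e.1:ℤ), -(e.2.1:ℤ), -(e.2.2:ℤ), -7, by rw [hnum]; ring,
      Or.inr (Or.inr (Or.inr rfl)),
      Or.inr (Or.inr (Or.inr ⟨e, he, rfl, rfl, rfl, rfl, rfl⟩))⟩

/-- Given any four numbers in `Q(K)`, their sum is exactly `0` if and only if those numbers
are `{x'_i, y'_j, z'_k, h'_ℓ}` for some hyperedge `h_ℓ = (x_i, y_j, z_k) ∈ E`. -/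
theorem unique_sum (q : ℕ) (E : Finset (ℕ × ℕ × ℕ)) (hE : ValidE q E)
    (n₁ n₂ n₃ n₄ : ℤ) (h₁ : n₁ ∈ QK q E) (h₂ : n₂ ∈ QK q E)
    (h₃ : n₃ ∈ QK q E) (h₄ : n₄ ∈ QK q E) :
    n₁ + n₂ + n₃ + n₄ = 0 ↔
      ∃ h ∈ E, ({n₁, n₂, n₃, n₄} : Multiset ℤ) =
        {xnum q h.1, ynum q h.2.1, znum q h.2.2, hnum q h} := by
  constructor
  · intro hsum
    obtain ⟨a₁, b₁, c₁, d₁, hn₁, hd₁, hcase₁⟩ := decomp q E n₁ h₁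
    obtain ⟨a₂, b₂, c₂, d₂, hn₂, hd₂, hcase₂⟩ := decomp q E n₂ h₂
    obtain ⟨a₃, b₃, c₃, d₃, hn₃, hd₃, hcase₃⟩ := decomp q E n₃ h₃
    obtain ⟨a₄, b₄, c₄, d₄, hn₄, hd₄, hcase₄⟩ := decomp q E n₄ h₄
    set R : ℤ := ((rho q : ℕ) : ℤ) with hRdef
    have hR29 : (29:ℤ) ≤ R := by
      have : 29 ≤ rho q := le_max_left _ _
      omega
    have hR3q : 3 * (q:ℤ) ≤ R := by
      have : 3 * q ≤ rho q := le_max_right _ _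
      omega
    have hRpos : (0:ℤ) < R := by omega
    rw [hn₁, hn₂, hn₃, hn₄] at hsum
    have hsum0 : (a₁+a₂+a₃+a₄)*R + (b₁+b₂+b₃+b₄)*R^2 + (c₁+c₂+c₃+c₄)*R^3
        + (d₁+d₂+d₃+d₄) = 0 := by linear_combination hsum
    have hb₁ : -7 ≤ d₁ ∧ d₁ ≤ 7 := by rcases hd₁ with h|h|h|h <;> omega
    have hb₂ : -7 ≤ d₂ ∧ d₂ ≤ 7 := by rcases hd₂ with h|h|h|h <;> omega
    have hb₃ : -7 ≤ d₃ ∧ d₃ ≤ 7 := by rcases hd₃ with h|h|h|h <;> omega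
    have hb₄ : -7 ≤ d₄ ∧ d₄ ≤ 7 := by rcases hd₄ with h|h|h|h <;> omega
    have hD0 : d₁+d₂+d₃+d₄ = 0 :=
      keyD R _ _ _ _ hsum0 (by omega) (by omega)
    rcases hcase₁ with ⟨i,hi1,hi2,rfl,rfl,rfl,rfl,hnx⟩|⟨j,hj1,hj2,rfl,rfl,rfl,rfl,hny⟩|⟨k,hk1,hk2,rfl,rfl,rfl,rfl,hnz⟩|⟨e,he,rfl,rfl,rfl,rfl,hnh⟩ <;>
    rcases hcase₂ with ⟨i,hi1,hi2,rfl,rfl,rfl,rfl,hnx⟩|⟨j,hj1,hj2,rfl,rfl,rfl,rfl,hny⟩|⟨k,hk1,hk2,rfl,rfl,rfl,rfl,hnz⟩|⟨e,he,rfl,rfl,rfl,rfl,hnh⟩ <;>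
    rcases hcase₃ with ⟨i,hi1,hi2,rfl,rfl,rfl,rfl,hnx⟩|⟨j,hj1,hj2,rfl,rfl,rfl,rfl,hny⟩|⟨k,hk1,hk2,rfl,rfl,rfl,rfl,hnz⟩|⟨e,he,rfl,rfl,rfl,rfl,hnh⟩ <;>
    rcases hcase₄ with ⟨i,hi1,hi2,rfl,rfl,rfl,rfl,hnx⟩|⟨j,hj1,hj2,rfl,rfl,rfl,rfl,hny⟩|⟨k,hk1,hk2,rfl,rfl,rfl,rfl,hnz⟩|⟨e,he,rfl,rfl,rfl,rfl,hnh⟩ <;>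
    first
      | omega
      | (refine ⟨e, he, ?_⟩
         obtain ⟨he1, he2, he3⟩ := hE e he
         rw [Finset.mem_Icc] at he1 he2 he3
         have h' : ((i:ℤ) - e.1)*R + ((j:ℤ) - e.2.1)*R^2 + ((k:ℤ) - e.2.2)*R^3 = 0 := by
           linear_combination hsum0
         obtain ⟨hA, hB, hC⟩ := keyABC R _ _ _ hRpos h'
           (by omega) (by omega) (by omega) (by omega)
         have e1 : e.1 = i := by omega
         have e2 : e.2.1 = j := by omega
         have e3 : e.2.2 = k := by omega
         rw [hnx, hny, hnz, hnh, e1, e2, e3]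
         try simp only [Multiset.insert_eq_cons, ← Multiset.cons_zero, Multiset.cons_swap])
  · rintro ⟨h, hmem, heq⟩
    have hs := congrArg Multiset.sum heq
    simp only [Multiset.insert_eq_cons, Multiset.sum_cons, Multiset.sum_singleton,
      xnum, ynum, znum, hnum] at hs
    linear_combination hs
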